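/- The functions U_k(t) = (1/2)·t^k·e^{-kt}·Σ_{n=0}^{k-1} k^{n-1}/n! satisfy dU_k/dt = (1/2)k²c_k + Σ_{i+j=k} i·U_i·j·c_j − k·U_k with U_k(0)=0, where c_k(t) = k^{k-2}/k!·t^{k-1}e^{-kt}. -/

import Mathlib

open Real Finset

noncomputable def crgDensity (k : ℕ) (t : ℝ) : ℝ :=
  (k : ℝ) ^ (k - 2) / (Nat.factorial k) * t ^ (k - 1) * Real.exp (-(k : ℝ) * t)

noncomputable def unicycleAvg (k : ℕ) (t : ℝ) : ℝ :=
  (1 / 2) * t ^ k * Real.exp (-(k : ℝ) * t) *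
    ∑ n ∈ Finset.range k, (k : ℝ) ^ ((n : ℤ) - 1) / (Nat.factorial n)

/-!
Differentiating `U_k` reduces the equation to the identity
`A_k = k^k/k! + ∑_{0<i<k} a_{k-i} A_i`, where `A_n = ∑_{m<n} n^m/m!` and `a_n = n^(n-1)/n!`.
For the power series `T = ∑ a_n zⁿ`, `B = ∑ n^n/n! zⁿ` and `A = ∑ A_n zⁿ` this reads
`A T = A - B + 1`, which is ring arithmetic once the two Abel-type convolutions `T B = B - 1` and
`B² = A + B` are known. These are the values at `y = 0` of identities
`∑_{i+j=n} c_i (y+j)^j/j! = R_n(y)`, proved by induction on `n`: both sides satisfy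
`F_{n+1}' (y) = F_n (y + 1)`, and at `y = -n` the left side becomes an `n`-th forward difference
of a power, which vanishes or equals `n!`.
-/

open scoped Nat
open PowerSeries

lemma hasDerivAt_pow_succ_div_factorial (m : ℕ) (x : ℝ) :
    HasDerivAt (fun x : ℝ => x ^ (m + 1) / (m + 1)!) (x ^ m / m !) x := by
  refine ((hasDerivAt_pow (m + 1) x).div_const _).congr_deriv ?_
  push_cast [Nat.factorial_succ, Nat.add_sub_cancel]
  field_simp

noncomputable def abelSum (c : ℕ → ℝ) (n : ℕ) (y : ℝ) : ℝ :=
  ∑ p ∈ antidiagonal n, c p.1 * ((y + p.2) ^ p.2 / p.2 !)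

lemma hasDerivAt_abelSum (c : ℕ → ℝ) (n : ℕ) (y : ℝ) :
    HasDerivAt (abelSum c (n + 1)) (abelSum c n (y + 1)) y := by
  have hterm (p : ℕ × ℕ) : HasDerivAt
      (fun y : ℝ => c p.1 * ((y + (p.2 + 1 : ℕ)) ^ (p.2 + 1) / (p.2 + 1)!))
      (c p.1 * ((y + 1 + p.2) ^ p.2 / p.2 !)) y := by
    have h := ((hasDerivAt_pow_succ_div_factorial p.2 _).comp_add_const y
      (p.2 + 1 : ℝ)).const_mul (c p.1)
    push_cast
    exact h.congr_deriv (by ring_nf)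
  have hsplit : abelSum c (n + 1) = fun y => c (n + 1) +
      ∑ p ∈ antidiagonal n, c p.1 * ((y + (p.2 + 1 : ℕ)) ^ (p.2 + 1) / (p.2 + 1)!) := by
    funext y
    simp [abelSum, Nat.sum_antidiagonal_succ']
  rw [hsplit]
  exact (HasDerivAt.fun_sum fun p _ => hterm p).const_add _

lemma abelSum_eq_of_hasDerivAt (c : ℕ → ℝ) (R : ℕ → ℝ → ℝ)
    (hR₀ : ∀ y, R 0 y = c 0) (hR : ∀ n y, HasDerivAt (R (n + 1)) (R n (y + 1)) y)
    (hagree : ∀ n, ∃ y, abelSum c (n + 1) y = R (n + 1) y) (n : ℕ) : abelSum c n = R n := by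
  induction n with
  | zero => ext y; simp [abelSum, hR₀]
  | succ n ih =>
    obtain ⟨y₀, hy₀⟩ := hagree n
    have hdiff (y : ℝ) : HasDerivAt (fun y => abelSum c (n + 1) y - R (n + 1) y) 0 y := by
      have h := (hasDerivAt_abelSum c n y).sub (hR n y)
      rwa [ih, sub_self] at h
    ext y
    have := is_const_of_deriv_eq_zero (fun y => (hdiff y).differentiableAt)
      (fun y => (hdiff y).deriv) y y₀
    simp only [hy₀, sub_self] at this
    exact sub_eq_zero.mp this

lemma abelSum_neg_natCast (c : ℕ → ℝ) (n : ℕ) :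
    abelSum c n (-n) = ∑ p ∈ antidiagonal n, c p.1 * (-p.1 : ℝ) ^ p.2 / p.2 ! := by
  refine sum_congr rfl fun p hp => ?_
  rw [← mem_antidiagonal.mp hp]
  push_cast
  ring_nf

lemma sum_antidiagonal_alternating_eq_fwdDiff (f : ℝ → ℝ) (n : ℕ) :
    ∑ p ∈ antidiagonal n, (-1) ^ p.2 * f p.1 / (p.1 ! * p.2 !) =
      (fwdDiff 1)^[n] f 0 / n ! := by
  rw [fwdDiff_iter_eq_sum_shift, sum_div, Nat.sum_antidiagonal_eq_sum_range_succ_mk]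
  refine sum_congr rfl fun k hk => ?_
  have hkn : k ≤ n := Nat.lt_succ_iff.mp (mem_range.mp hk)
  simp only [zsmul_eq_mul, zero_add, nsmul_eq_mul, mul_one]
  push_cast
  rw [Nat.cast_choose ℝ hkn]
  field_simp

lemma sum_antidiagonal_alternating_pow_of_lt {m n : ℕ} (h : m < n) :
    ∑ p ∈ antidiagonal n, (-1) ^ p.2 * (p.1 : ℝ) ^ m / (p.1 ! * p.2 !) = 0 := by
  rw [sum_antidiagonal_alternating_eq_fwdDiff (· ^ m), fwdDiff_iter_pow_eq_zero_of_lt h]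
  simp

lemma sum_antidiagonal_alternating_pow_self (n : ℕ) :
    ∑ p ∈ antidiagonal n, (-1) ^ p.2 * (p.1 : ℝ) ^ n / (p.1 ! * p.2 !) = 1 := by
  rw [sum_antidiagonal_alternating_eq_fwdDiff (· ^ n), fwdDiff_iter_eq_factorial]
  simp [Nat.factorial_ne_zero]

noncomputable def expPartialSum (n : ℕ) (x : ℝ) : ℝ := ∑ m ∈ range n, x ^ m / m !

lemma hasDerivAt_expPartialSum (n : ℕ) (x : ℝ) :
    HasDerivAt (expPartialSum (n + 1)) (expPartialSum n x) x := by
  have hsplit :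
      expPartialSum (n + 1) = fun x : ℝ => ∑ m ∈ range n, x ^ (m + 1) / (m + 1)! + 1 := by
    funext x
    simp [expPartialSum, sum_range_succ']
  rw [hsplit]
  exact (HasDerivAt.fun_sum fun m _ => hasDerivAt_pow_succ_div_factorial m x).add_const 1

lemma expPartialSum_succ_zero (n : ℕ) : expPartialSum (n + 1) 0 = 1 := by
  simp [expPartialSum, sum_range_succ']

/-- This is `n^(n-1)/n!` for `n ≥ 1` (truncated subtraction gives `1 * 1^(1-2) = 1`) and `0` for
`n = 0`, written in the shape in which it comes out of `n * crgDensity n`. -/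
noncomputable def treeCoeff (n : ℕ) : ℝ := n * (n : ℝ) ^ (n - 2) / n !

noncomputable def selfPowCoeff (n : ℕ) : ℝ := (n : ℝ) ^ n / n !

lemma natCast_mul_pow_sub_two {R : Type*} [Semiring R] {m : ℕ} (hm : m ≠ 0) :
    (m : R) * (m : R) ^ (m - 2) = (m : R) ^ (m - 1) := by
  obtain _ | _ | m := m
  · contradiction
  · simp
  · rw [show m + 2 - 2 = m by omega, show m + 2 - 1 = m + 1 by omega, pow_succ']

lemma natCast_mul_treeCoeff {n : ℕ} (hn : n ≠ 0) : n * treeCoeff n = selfPowCoeff n := by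
  rw [treeCoeff, selfPowCoeff, mul_div_assoc', natCast_mul_pow_sub_two hn, ← pow_succ',
    Nat.sub_add_cancel (Nat.one_le_iff_ne_zero.mpr hn)]

lemma abelSum_treeCoeff (n : ℕ) :
    abelSum treeCoeff n = fun y : ℝ => n * (y + n) ^ (n - 1) / n ! := by
  refine abelSum_eq_of_hasDerivAt _ (fun n y => n * (y + n) ^ (n - 1) / n !)
    (fun y => by simp [treeCoeff]) (fun n y => ?_) (fun n => ⟨-(n + 1 : ℕ), ?_⟩) n
  · have h := ((hasDerivAt_pow n (y + (n + 1 : ℕ))).comp_add_const y _).div_const (n ! : ℝ)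
    refine (h.congr_deriv ?_).congr_of_eventuallyEq (Filter.Eventually.of_forall fun x => ?_)
    · push_cast
      ring_nf
    · simp only [Nat.add_sub_cancel, Nat.factorial_succ]
      push_cast
      field_simp
  · rw [neg_add_cancel]
    obtain _ | m := n
    · simp [abelSum, treeCoeff, Nat.sum_antidiagonal_succ]
    rw [zero_pow (by omega), mul_zero, zero_div, abelSum_neg_natCast,
      ← sum_antidiagonal_alternating_pow_of_lt (Nat.lt_succ_self (m + 1))]
    refine sum_congr rfl fun p hp => ?_
    obtain ⟨i, j⟩ := p
    have hij : i + j = m + 2 := mem_antidiagonal.mp hp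
    rcases eq_or_ne i 0 with rfl | hi
    · simp [treeCoeff]
    rw [treeCoeff, natCast_mul_pow_sub_two hi, neg_pow, show m + 1 = (i - 1) + j by omega, pow_add]
    field_simp

lemma abelSum_selfPowCoeff (n : ℕ) :
    abelSum selfPowCoeff n = fun y => expPartialSum (n + 1) (y + n) := by
  refine abelSum_eq_of_hasDerivAt _ (fun n y => expPartialSum (n + 1) (y + n))
    (fun y => by simp [selfPowCoeff, expPartialSum]) (fun n y => ?_)
    (fun n => ⟨-(n + 1 : ℕ), ?_⟩) n
  · refine ((hasDerivAt_expPartialSum (n + 1) _).comp_add_const y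
      ((n + 1 : ℕ) : ℝ)).congr_deriv ?_
    congr 1
    push_cast
    ring
  · rw [abelSum_neg_natCast, neg_add_cancel, expPartialSum_succ_zero,
      ← sum_antidiagonal_alternating_pow_self (n + 1)]
    refine sum_congr rfl fun p hp => ?_
    rw [← mem_antidiagonal.mp hp, selfPowCoeff, neg_pow, pow_add]
    ring

lemma coeff_mul_mk (f g : ℕ → ℝ) (n : ℕ) :
    coeff n (mk f * mk g) = ∑ p ∈ antidiagonal n, f p.1 * g p.2 := by
  simp [coeff_mul]

lemma mk_treeCoeff_mul_mk_selfPowCoeff :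
    mk treeCoeff * mk selfPowCoeff = mk selfPowCoeff - 1 := by
  ext n
  have h := congrFun (abelSum_treeCoeff n) 0
  simp only [abelSum, zero_add] at h
  rw [coeff_mul_mk, map_sub, coeff_mk, coeff_one]
  simp only [selfPowCoeff]
  rw [h]
  obtain _ | n := n
  · simp
  · simp [pow_succ']

lemma mk_selfPowCoeff_sq : mk selfPowCoeff * mk selfPowCoeff =
    mk (fun n => expPartialSum n n) + mk selfPowCoeff := by
  ext n
  have h := congrFun (abelSum_selfPowCoeff n) 0
  simp only [abelSum, zero_add] at h
  rw [coeff_mul_mk, map_add, coeff_mk, coeff_mk]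
  simp only [selfPowCoeff] at h ⊢
  rw [h, expPartialSum, sum_range_succ, expPartialSum]

lemma sum_range_succ_eq_sum_Ioo {M : Type*} [AddCommMonoid M] (f : ℕ → M) {k : ℕ}
    (h₀ : f 0 = 0) (hk : f k = 0) : ∑ i ∈ range (k + 1), f i = ∑ i ∈ Ioo 0 k, f i := by
  refine (sum_subset (fun i hi => ?_) fun i hi hi' => ?_).symm
  · simp only [mem_Ioo] at hi; simp only [mem_range]; omega
  · simp only [mem_range, mem_Ioo, not_and_or, not_lt] at hi hi'
    obtain h | h := hi'
    · rw [Nat.le_zero.mp h, h₀]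
    · rw [show i = k by omega, hk]

lemma expPartialSum_self_eq (k : ℕ) (hk : k ≠ 0) :
    expPartialSum k k = selfPowCoeff k +
      ∑ i ∈ Ioo 0 k, treeCoeff (k - i) * expPartialSum i i := by
  set T := mk treeCoeff
  set B := mk selfPowCoeff
  set A := mk fun n => expPartialSum n n
  have hTB : T * B = B - 1 := mk_treeCoeff_mul_mk_selfPowCoeff
  have hBB : B * B = A + B := mk_selfPowCoeff_sq
  have hAT : A * T = A - B + 1 := by linear_combination (B - 1) * hTB + (1 - T) * hBB
  have h := congrArg (coeff k) hAT
  rw [coeff_mul_mk, Nat.sum_antidiagonal_eq_sum_range_succ_mk, sum_range_succ_eq_sum_Ioo] at h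
  · simp only [A, B, coeff_mk, map_add, map_sub, coeff_one, hk, if_false, add_zero,
      mul_comm (expPartialSum _ _)] at h
    linarith
  · simp [expPartialSum]
  · simp [treeCoeff]

lemma natCast_mul_sum_zpow_sub_one {k : ℕ} (hk : k ≠ 0) :
    (k : ℝ) * ∑ n ∈ range k, (k : ℝ) ^ ((n : ℤ) - 1) / n ! = expPartialSum k k := by
  rw [expPartialSum, mul_sum]
  refine sum_congr rfl fun n _ => ?_
  rw [zpow_sub_one₀ (Nat.cast_ne_zero.mpr hk), zpow_natCast]
  field_simp

lemma natCast_mul_unicycleAvg {k : ℕ} (hk : k ≠ 0) (t : ℝ) :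
    k * unicycleAvg k t = t ^ k * exp (-k * t) * expPartialSum k k / 2 := by
  rw [unicycleAvg, ← natCast_mul_sum_zpow_sub_one hk]
  ring

lemma natCast_mul_crgDensity (m : ℕ) (t : ℝ) :
    m * crgDensity m t = treeCoeff m * t ^ (m - 1) * exp (-m * t) := by
  rw [crgDensity, treeCoeff]
  ring

lemma natCast_sq_mul_crgDensity {k : ℕ} (hk : k ≠ 0) (t : ℝ) :
    (k : ℝ) ^ 2 * crgDensity k t = t ^ (k - 1) * exp (-k * t) * selfPowCoeff k := by
  linear_combination k * natCast_mul_crgDensity k t +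
    t ^ (k - 1) * exp (-k * t) * natCast_mul_treeCoeff hk

lemma hasDerivAt_unicycleAvg {k : ℕ} (hk : k ≠ 0) (t : ℝ) :
    HasDerivAt (unicycleAvg k)
      (t ^ (k - 1) * exp (-k * t) * expPartialSum k k / 2 - k * unicycleAvg k t) t := by
  have hexp : HasDerivAt (fun t => exp (-k * t)) (exp (-k * t) * -k) t :=
    ((hasDerivAt_id t).const_mul (-k : ℝ)).exp.congr_deriv (by simp)
  refine ((((hasDerivAt_pow k t).const_mul (1 / 2 : ℝ)).mul hexp).mul_const _).congr_deriv ?_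
  rw [natCast_mul_unicycleAvg hk, ← natCast_mul_sum_zpow_sub_one hk]
  obtain _ | k := k
  · contradiction
  · simp only [Nat.add_sub_cancel, pow_succ]
    ring

lemma unicycleAvg_mul_crgDensity {i k : ℕ} (hi : i ∈ Ioo 0 k) (t : ℝ) :
    i * unicycleAvg i t * ((k - i : ℕ) : ℝ) * crgDensity (k - i) t =
      t ^ (k - 1) * exp (-k * t) / 2 * (treeCoeff (k - i) * expPartialSum i i) := by
  obtain ⟨hi₀, hik⟩ := mem_Ioo.mp hi
  rw [mul_assoc _ ((k - i : ℕ) : ℝ), natCast_mul_crgDensity, natCast_mul_unicycleAvg hi₀.ne']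
  have hpow : t ^ i * t ^ (k - i - 1) = t ^ (k - 1) := by rw [← pow_add]; congr 1; omega
  have hexp : exp (-i * t) * exp (-((k - i : ℕ) : ℝ) * t) = exp (-k * t) := by
    rw [← exp_add, Nat.cast_sub hik.le]; ring_nf
  linear_combination (treeCoeff (k - i) * expPartialSum i i / 2) *
    (exp (-i * t) * exp (-((k - i : ℕ) : ℝ) * t) * hpow + t ^ (k - 1) * hexp)

theorem stmt_6 :
    (∀ k ≥ 1, ∀ t : ℝ,
      HasDerivAt (unicycleAvg k)
        ((1 / 2) * (k : ℝ) ^ 2 * crgDensity k t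
          + ∑ i ∈ Finset.Ioo 0 k,
              (i : ℝ) * unicycleAvg i t * ((k - i : ℕ) : ℝ) * crgDensity (k - i) t
          - (k : ℝ) * unicycleAvg k t) t) ∧
    (∀ k ≥ 1, unicycleAvg k 0 = 0) := by
  refine ⟨fun k hk t => ?_, fun k hk => by simp [unicycleAvg, zero_pow (by omega : k ≠ 0)]⟩
  have hk₀ : k ≠ 0 := by omega
  rw [mul_assoc _ ((k : ℝ) ^ 2), natCast_sq_mul_crgDensity hk₀,
    sum_congr rfl fun i hi => unicycleAvg_mul_crgDensity hi t, ← mul_sum]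
  refine (hasDerivAt_unicycleAvg hk₀ t).congr_deriv ?_
  rw [expPartialSum_self_eq k hk₀]
  ring
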